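/- The function f₀(r) := (1+r²)^{3/2} log(r + √(1+r²))/r - (1+r²)/2 is strictly positive for every r > 0, and there exists R₀ > 0 such that R² log R ≤ f₀(R) ≤ 2 R² log R for every R ≥ R₀. -/
import Mathlib


noncomputable section

/-- The coefficient function `f₀(r) = (1+r²)^{3/2} log(r + √(1+r²))/r - (1+r²)/2`. -/
def f0 (r : ℝ) : ℝ :=
  (1 + r ^ 2) ^ ((3:ℝ)/2) * Real.log (r + Real.sqrt (1 + r ^ 2)) / r - (1 + r ^ 2) / 2

/-- Rewriting `f₀` using `√(1+r²)³` instead of the real power `(1+r²)^{3/2}`. -/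
lemma f0_eq (r : ℝ) :
    f0 r = (Real.sqrt (1 + r ^ 2)) ^ 3 * Real.log (r + Real.sqrt (1 + r ^ 2)) / r
      - (1 + r ^ 2) / 2 := by
  have hx : (0:ℝ) ≤ 1 + r ^ 2 := by positivity
  unfold f0
  rw [show (3:ℝ)/2 = (1/2)*3 by ring, Real.rpow_mul hx, ← Real.sqrt_eq_rpow,
    show (3:ℝ) = ((3:ℕ):ℝ) by norm_num, Real.rpow_natCast]

/-- `f₀` is strictly positive on `(0,∞)`. -/
lemma f0_pos (r : ℝ) (hr : 0 < r) : 0 < f0 r := by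
  set s := Real.sqrt (1 + r ^ 2) with hs
  have hs2 : s ^ 2 = 1 + r ^ 2 := Real.sq_sqrt (by positivity)
  have hs0 : 0 < s := Real.sqrt_pos.mpr (by positivity)
  have hs1 : 1 ≤ s := by nlinarith [sq_nonneg r]
  have hsub : s ≤ 1 + r ^ 2 / 2 := by
    rw [hs, show 1 + r ^ 2 / 2 = Real.sqrt ((1 + r ^ 2 / 2) ^ 2) by
      rw [Real.sqrt_sq (by positivity)]]
    exact Real.sqrt_le_sqrt (by nlinarith)
  set L := Real.log (r + s) with hL
  have hrs1 : 1 < r + s := by linarith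
  have hlog_lb : ((r + s) - 1) / (r + s) ≤ L := by
    have h1 := Real.log_le_sub_one_of_pos (show (0:ℝ) < (r + s)⁻¹ by positivity)
    rw [Real.log_inv] at h1
    have h2 : 1 - (r + s)⁻¹ ≤ L := by linarith
    have h3 : ((r + s) - 1) / (r + s) = 1 - (r + s)⁻¹ := by
      field_simp
    linarith [h3 ▸ h2, le_of_eq h3]
  have hkey : r / (2 * s) < ((r + s) - 1) / (r + s) := by
    rw [div_lt_div_iff₀ (by positivity) (by positivity)]
    nlinarith [mul_pos hr hs0]
  have hLlb : r / (2 * s) < L := lt_of_lt_of_le hkey hlog_lb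
  have hL' : r < L * (2 * s) := (div_lt_iff₀ (by positivity)).mp hLlb
  rw [f0_eq, sub_pos, div_lt_div_iff₀ (by norm_num) hr]
  nlinarith [mul_lt_mul_of_pos_left hL' (pow_pos hs0 2), hs2]

/-- **Positivity and asymptotics of `f₀`.** The function `f₀` is strictly positive on
`(0,∞)`, and there is `R₀ > 0` such that `R² log R ≤ f₀(R) ≤ 2 R² log R` for all `R ≥ R₀`. -/
theorem f0_positive_and_asymptotics :
    (∀ r : ℝ, 0 < r → 0 < f0 r) ∧
    ∃ R₀ : ℝ, 0 < R₀ ∧ ∀ R : ℝ, R₀ ≤ R →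
      R ^ 2 * Real.log R ≤ f0 R ∧ f0 R ≤ 2 * R ^ 2 * Real.log R := by
  refine ⟨fun r hr => f0_pos r hr, 10, by norm_num, fun R hR => ?_⟩
  have hR0 : (0:ℝ) < R := by linarith
  set s := Real.sqrt (1 + R ^ 2) with hs
  have hs2 : s ^ 2 = 1 + R ^ 2 := Real.sq_sqrt (by positivity)
  have hs0 : 0 < s := Real.sqrt_pos.mpr (by positivity)
  have hRs : R ≤ s := by nlinarith
  have hsle : s ≤ (201/200) * R := by
    rw [hs, show (201/200) * R = Real.sqrt (((201/200) * R) ^ 2) by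
      rw [Real.sqrt_sq (by positivity)]]
    exact Real.sqrt_le_sqrt (by nlinarith)
  set L := Real.log (R + s) with hL
  have hlog2 : (0.6931471803 : ℝ) < Real.log 2 := Real.log_two_gt_d9
  have hlogR : 3 * Real.log 2 ≤ Real.log R := by
    have h8 : Real.log 8 ≤ Real.log R := Real.log_le_log (by norm_num) (by linarith)
    rw [show (8:ℝ) = 2 ^ 3 by norm_num, Real.log_pow] at h8
    push_cast at h8
    linarith
  have hL1 : Real.log 2 + Real.log R ≤ L := by
    have : Real.log (2 * R) ≤ L :=
      Real.log_le_log (by positivity) (by linarith)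
    rwa [Real.log_mul (by norm_num) (by positivity)] at this
  have hL0 : 0 ≤ L := by linarith
  have hLub : L ≤ 201/200 + Real.log R := by
    have h1 : L ≤ Real.log ((401/200) * R) :=
      Real.log_le_log (by positivity) (by linarith)
    rw [Real.log_mul (by norm_num) (by positivity)] at h1
    have h2 : Real.log (401/200) ≤ 401/200 - 1 :=
      Real.log_le_sub_one_of_pos (by norm_num)
    linarith
  have hRcube : R ^ 3 ≤ s ^ 3 := pow_le_pow_left₀ hR0.le hRs 3
  have hscube : s ^ 3 ≤ (201/200) ^ 3 * R ^ 3 := by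
    calc s ^ 3 ≤ ((201/200) * R) ^ 3 := pow_le_pow_left₀ hs0.le hsle 3
    _ = (201/200) ^ 3 * R ^ 3 := by ring
  constructor
  · rw [f0_eq]
    have h1 : R ^ 2 * L ≤ s ^ 3 * L / R := by
      rw [le_div_iff₀ hR0]
      nlinarith [mul_le_mul_of_nonneg_right hRcube hL0]
    nlinarith [mul_le_mul_of_nonneg_left hL1 (sq_nonneg R)]
  · rw [f0_eq]
    have h2 : s ^ 3 * L / R ≤ 2 * R ^ 2 * Real.log R := by
      rw [div_le_iff₀ hR0]
      have h3 : s ^ 3 * L ≤ ((201/200) ^ 3 * R ^ 3) * (201/200 + Real.log R) :=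
        mul_le_mul hscube hLub hL0 (by positivity)
      nlinarith [pow_pos hR0 3, hlogR, hlog2, mul_le_mul_of_nonneg_left
        (show (2.0794415409:ℝ) ≤ Real.log R by nlinarith) (le_of_lt (pow_pos hR0 3))]
    nlinarith [h2, sq_nonneg R]
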